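/- Let φ : X → ℝ ∪ {±∞} be radially pseudoconvex and radially l.s.c. at a ∈ dom φ with dom φ star-shaped at a. If φ↓(b, a - b) < 0 for some b, then for every t ≥ 1, setting b_t = a + t(b - a), one has φ↓(b_t, a - b_t) < 0; and if additionally φ(b) > -∞, then φ(b_t) > -∞ for all t ≥ 1. -/

import Mathlib

open Filter Set

/-- Inf-addition on the extended reals. -/
noncomputable def infAdd (r s : EReal) : EReal :=
  sInf {x : EReal | ∃ a b : ℝ, x = ((a + b : ℝ) : EReal) ∧ r ≤ (a : EReal) ∧ s ≤ (b : EReal)}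

/-- Inf-residuation on the extended reals. -/
noncomputable def eResid (r s : EReal) : EReal :=
  sInf {x : EReal | ∃ t : ℝ, x = (t : EReal) ∧ r ≤ infAdd s (t : EReal)}

/-- Lower Dini directional derivative of `ψ : ℝ → EReal`. -/
noncomputable def sDini (ψ : ℝ → EReal) (x u : ℝ) : EReal :=
  Filter.liminf (fun t : ℝ => ((1 / t : ℝ) : EReal) * eResid (ψ (x + t * u)) (ψ x))
    (nhdsWithin 0 (Set.Ioi 0))

/-- Lower Dini directional derivative of `φ : X → EReal`. -/
noncomputable def vDini {X : Type*} [AddCommGroup X] [Module ℝ X]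
    (φ : X → EReal) (x u : X) : EReal :=
  Filter.liminf (fun t : ℝ => ((1 / t : ℝ) : EReal) * eResid (φ (x + t • u)) (φ x))
    (nhdsWithin 0 (Set.Ioi 0))

/-- Radial restriction of `φ` to the segment `[a,b]`, extended by `+∞`. -/
noncomputable def radRestr {X : Type*} [AddCommGroup X] [Module ℝ X]
    (φ : X → EReal) (a b : X) : ℝ → EReal :=
  fun t : ℝ => if t ∈ Set.Icc (0 : ℝ) 1 then φ (a + t • (b - a)) else ⊤

/-- Pseudoconvexity (via the lower Dini derivative) of a function on `ℝ`. -/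
noncomputable def PCone (ψ : ℝ → EReal) : Prop :=
  ∀ u v : ℝ, ψ u < ψ v → sDini ψ v (u - v) < 0

/-!
Restricting `φ` to the segment from `a` to `b_t` reduces everything to a lower semicontinuous
pseudoconvex `ψ : ℝ → EReal` on `[0, 1]`, with `b` at `1/t` and `b_t` at `1`. Such a `ψ` is
quasiconvex wherever it is finite: if `ψ q > max (ψ p) (ψ r)` with `p < q < r`, then on a small
interval around `q` the function stays above `max (ψ p) (ψ r)`, and at a minimiser of `ψ` on that
interval pseudoconvexity (towards `p` or towards `r`) produces a descent direction that stays in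
the interval. The hypothesis at `b` yields `u < 1/t` with `ψ u < ψ (1/t)` or `ψ u = ⊥`;
quasiconvexity on `[u, 1]` then gives either `ψ u < ψ 1`, and pseudoconvexity at `1` gives the
negative derivative, or `ψ = ⊥` on `[u, 1]`, where the derivative is `⊥`.
-/

open Topology

lemma infAdd_coe_right (r : EReal) (t : ℝ) : infAdd r t = r + t := by
  induction r with
  | bot =>
    refine sInf_eq_bot.2 fun y hy => ?_
    obtain ⟨m, -, hm⟩ := EReal.exists_between_coe_real hy
    exact ⟨((m - t + t : ℝ) : EReal), ⟨m - t, t, rfl, bot_le, le_rfl⟩, by simpa using hm⟩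
  | coe x =>
    refine le_antisymm (sInf_le ⟨x, t, rfl, le_rfl, le_rfl⟩) (le_sInf ?_)
    rintro _ ⟨a, b, rfl, ha, hb⟩
    exact_mod_cast add_le_add (EReal.coe_le_coe_iff.1 ha) (EReal.coe_le_coe_iff.1 hb)
  | top =>
    refine top_le_iff.1 (le_sInf ?_)
    rintro _ ⟨a, b, -, ha, -⟩
    exact absurd ha (EReal.coe_lt_top a).not_ge

lemma eResid_eq_sInf_image (r s : EReal) :
    eResid r s = sInf ((fun t : ℝ => (t : EReal)) '' {t | r ≤ s + t}) := by
  simp only [eResid, infAdd_coe_right, image, mem_ofPred_eq, eq_comm, and_comm]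

lemma eResid_eq_bot_of_forall_le {r s : EReal} (h : ∀ t : ℝ, r ≤ s + t) :
    eResid r s = ⊥ := by
  rw [eResid_eq_sInf_image]
  refine sInf_eq_bot.2 fun y hy => ?_
  obtain ⟨m, -, hm⟩ := EReal.exists_between_coe_real hy
  exact ⟨m, mem_image_of_mem _ (h m), hm⟩

lemma eResid_bot_left (s : EReal) : eResid ⊥ s = ⊥ :=
  eResid_eq_bot_of_forall_le fun _ => bot_le

lemma eResid_top_right (r : EReal) : eResid r ⊤ = ⊥ :=
  eResid_eq_bot_of_forall_le fun t => by simp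

lemma eResid_nonneg {r s : EReal} (hsr : s ≤ r) (hr : r ≠ ⊥) (hs : s ≠ ⊤) :
    0 ≤ eResid r s := by
  rw [eResid_eq_sInf_image]
  refine le_sInf ?_
  rintro _ ⟨t, ht, rfl⟩
  induction s with
  | bot => exact absurd (le_bot_iff.1 (by simpa using ht)) hr
  | coe y =>
    have : (y : EReal) ≤ ((y + t : ℝ) : EReal) := hsr.trans (by simpa using ht)
    show (0 : EReal) ≤ t
    exact_mod_cast (by linarith [EReal.coe_le_coe_iff.1 this] : (0 : ℝ) ≤ t)
  | top => exact absurd rfl hs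

lemma eq_bot_or_lt_of_eResid_neg {r s : EReal} (h : eResid r s < 0) (hs : s ≠ ⊤) :
    r = ⊥ ∨ r < s := by
  by_contra! hrs
  exact (eResid_nonneg hrs.2 hrs.1 hs).not_gt h

lemma eventually_add_mul_mem {S : Set ℝ} (hS : Convex ℝ S) {x d δ : ℝ} (hδ : 0 < δ)
    (hx : x ∈ S) (hxδ : x + δ * d ∈ S) : ∀ᶠ s in 𝓝[>] 0, x + s * d ∈ S := by
  filter_upwards [Ioo_mem_nhdsGT hδ] with s hs
  have h := hS.add_smul_sub_mem hx hxδ ⟨div_nonneg hs.1.le hδ.le, (div_le_one hδ).2 hs.2.le⟩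
  rwa [smul_eq_mul, add_sub_cancel_left, ← mul_assoc, div_mul_cancel₀ _ hδ.ne'] at h

section OneDim

variable {ψ : ℝ → EReal}

lemma sDini_eq_bot_of_eventually {x d : ℝ}
    (h : ∀ᶠ s in 𝓝[>] 0, eResid (ψ (x + s * d)) (ψ x) = ⊥) : sDini ψ x d = ⊥ := by
  refine le_bot_iff.1 (liminf_le_of_frequently_le (Eventually.frequently ?_))
  filter_upwards [h, self_mem_nhdsWithin] with s hs hpos
  rw [hs, EReal.coe_mul_bot_of_pos (one_div_pos.2 hpos)]

lemma frequently_eq_bot_or_lt_of_sDini_neg {x d : ℝ} (h : sDini ψ x d < 0) (hx : ψ x ≠ ⊤) :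
    ∃ᶠ s in 𝓝[>] 0, ψ (x + s * d) = ⊥ ∨ ψ (x + s * d) < ψ x := by
  refine ((frequently_lt_of_liminf_lt (by isBoundedDefault) h).and_eventually
    self_mem_nhdsWithin).mono fun s ⟨hs, hpos⟩ => eq_bot_or_lt_of_eResid_neg ?_ hx
  by_contra! h0
  exact (EReal.mul_nonneg (EReal.coe_nonneg.2 (one_div_pos.2 hpos).le) h0).not_gt hs

lemma sDini_mul_direction {x d c : ℝ} (hc : 0 < c) :
    sDini ψ x (c * d) = c * sDini ψ x d := by
  have hmap : map (c * ·) (𝓝[>] (0 : ℝ)) = 𝓝[>] 0 := by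
    conv_lhs => rw [← comap_mulLeft_nhdsGT_zero hc]
    exact map_comap_of_surjective (mul_left_surjective₀ hc.ne') _
  -- this also holds at `s = 0`, where both coefficients are the junk value `1 / 0 = 0`
  have hfun : ∀ s : ℝ, ((1 / s : ℝ) : EReal) * eResid (ψ (x + s * (c * d))) (ψ x) =
      c * (((1 / (c * s) : ℝ) : EReal) * eResid (ψ (x + c * s * d)) (ψ x)) := by
    intro s
    rw [show s * (c * d) = c * s * d by ring, ← mul_assoc, ← EReal.coe_mul, mul_one_div,
      div_mul_eq_div_div, div_self hc.ne', mul_assoc]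
  rw [sDini, funext hfun, EReal.liminf_const_mul_of_nonneg_of_ne_top (EReal.coe_nonneg.2 hc.le)
    (EReal.coe_ne_top c), sDini]
  conv_rhs => rw [← hmap]
  rfl

lemma sDini_mul_direction_neg {x d c : ℝ} (hc : 0 < c) (h : sDini ψ x d < 0) :
    sDini ψ x (c * d) < 0 := by
  rw [sDini_mul_direction hc]
  exact EReal.mul_neg_iff.2 (Or.inl ⟨EReal.coe_pos.2 hc, h⟩)

lemma sDini_congr {ψ' : ℝ → EReal} {x d : ℝ} (hx : ψ x = ψ' x)
    (h : ∀ᶠ s in 𝓝[>] 0, ψ (x + s * d) = ψ' (x + s * d)) : sDini ψ x d = sDini ψ' x d :=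
  liminf_congr (h.mono fun s hs => by rw [hs, hx])

lemma exists_eq_bot_or_lt_of_sDini_neg {p w : ℝ} (hpw : p < w) (hw : sDini ψ w (-1) < 0)
    (hfin : ψ w ≠ ⊤) : ∃ u ∈ Ico p w, ψ u = ⊥ ∨ ψ u < ψ w := by
  obtain ⟨s, hdesc, hs, hpos⟩ := ((frequently_eq_bot_or_lt_of_sDini_neg hw hfin).and_eventually
    ((eventually_add_mul_mem (convex_Icc p w) (d := -1) (sub_pos.2 hpw) ⟨hpw.le, le_rfl⟩
      (by simpa using hpw.le)).and self_mem_nhdsWithin)).exists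
  exact ⟨_, ⟨hs.1, by linarith [show (0 : ℝ) < s from hpos]⟩, hdesc⟩

lemma PCone.le_of_isMinOn (hpc : PCone ψ) {S : Set ℝ} (hS : Convex ℝ S) {x y δ : ℝ}
    (hx : x ∈ S) (hmin : IsMinOn ψ S x) (hfin : ψ x ≠ ⊤) (hδ : 0 < δ)
    (hxy : x + δ * (y - x) ∈ S) : ψ x ≤ ψ y := by
  by_contra! hyx
  obtain ⟨s, hdesc, hs⟩ := ((frequently_eq_bot_or_lt_of_sDini_neg (hpc y x hyx)
    hfin).and_eventually (eventually_add_mul_mem hS hδ hx hxy)).exists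
  have hle : ψ x ≤ ψ (x + s * (y - x)) := hmin hs
  rcases hdesc with hbot | hlt
  · exact (bot_le.trans_lt hyx).ne' (le_bot_iff.1 (hbot ▸ hle))
  · exact hle.not_gt hlt

theorem PCone.le_max (hpc : PCone ψ) (hlsc : LowerSemicontinuous ψ) {p q r : ℝ}
    (hpq : p ≤ q) (hqr : q ≤ r) (hfin : ∀ x ∈ Icc p r, ψ x ≠ ⊤) :
    ψ q ≤ max (ψ p) (ψ r) := by
  by_contra! hq
  obtain ⟨c, hc, hcq⟩ := EReal.exists_between_coe_real hq
  have hp : p < q := hpq.lt_of_ne (by rintro rfl; exact (le_max_left _ _).not_gt hq)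
  have hr : q < r := hqr.lt_of_ne (by rintro rfl; exact (le_max_right _ _).not_gt hq)
  have hU : Ioo p r ∩ ψ ⁻¹' Ioi (c : EReal) ∈ 𝓝 q :=
    (isOpen_Ioo.inter (hlsc.isOpen_preimage c)).mem_nhds ⟨⟨hp, hr⟩, hcq⟩
  obtain ⟨l, u, ⟨hlq, hqu⟩, hlu⟩ := mem_nhds_iff_exists_Ioo_subset.1 hU
  obtain ⟨lo, hi, hlohi, hK⟩ :
      ∃ lo hi, lo < hi ∧ Icc lo hi ⊆ Ioo p r ∩ ψ ⁻¹' Ioi (c : EReal) :=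
    ⟨(l + q) / 2, (q + u) / 2, by linarith,
      (Icc_subset_Ioo (by linarith) (by linarith)).trans hlu⟩
  obtain ⟨q₀, hq₀, hmin⟩ :=
    (hlsc.lowerSemicontinuousOn _).exists_isMinOn (nonempty_Icc.2 hlohi.le) isCompact_Icc
  have hfin₀ : ψ q₀ ≠ ⊤ := hfin q₀ (Ioo_subset_Icc_self (hK hq₀).1)
  have hcq₀ : (c : EReal) < ψ q₀ := (hK hq₀).2
  obtain ⟨hpq₀, hq₀r⟩ := (hK hq₀).1
  rcases lt_or_ge q₀ hi with hq₀hi | hhiq₀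
  · have := hpc.le_of_isMinOn (convex_Icc lo hi) hq₀ hmin hfin₀ (y := r)
      (div_pos (sub_pos.2 hq₀hi) (sub_pos.2 hq₀r))
      (by rw [div_mul_cancel₀ _ (sub_pos.2 hq₀r).ne']; simpa using hlohi.le)
    exact (this.trans (le_max_right _ _)).not_gt (hc.trans hcq₀)
  · have hloq₀ : lo < q₀ := hlohi.trans_le hhiq₀
    have := hpc.le_of_isMinOn (convex_Icc lo hi) hq₀ hmin hfin₀ (y := p)
      (div_pos (sub_pos.2 hloq₀) (sub_pos.2 hpq₀))
      (by rw [← neg_sub q₀ p, mul_neg, div_mul_cancel₀ _ (sub_pos.2 hpq₀).ne']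
          simpa using hlohi.le)
    exact (this.trans (le_max_left _ _)).not_gt (hc.trans hcq₀)

theorem PCone.sDini_neg_of_sDini_neg (hpc : PCone ψ) (hlsc : LowerSemicontinuous ψ)
    {p w z : ℝ} (hpw : p < w) (hwz : w ≤ z) (hdom : ψ z ≠ ⊤ → ∀ x ∈ Icc p z, ψ x ≠ ⊤)
    (hw : sDini ψ w (-1) < 0) : sDini ψ z (-1) < 0 ∧ (ψ w ≠ ⊥ → ψ z ≠ ⊥) := by
  by_cases hztop : ψ z = ⊤
  · refine ⟨(sDini_eq_bot_of_eventually (.of_forall fun _ => ?_)).trans_lt EReal.bot_lt_zero,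
      fun _ => hztop ▸ top_ne_bot⟩
    rw [hztop, eResid_top_right]
  have hfin := hdom hztop
  obtain ⟨u, ⟨hpu, huw⟩, hu⟩ :=
    exists_eq_bot_or_lt_of_sDini_neg hpw hw (hfin w ⟨hpw.le, hwz⟩)
  have huz : u < z := huw.trans_le hwz
  have hqc : ∀ x ∈ Icc u z, ψ x ≤ max (ψ u) (ψ z) := fun x hx =>
    hpc.le_max hlsc hx.1 hx.2 fun y hy => hfin y ⟨hpu.trans hy.1, hy.2⟩
  have hbot : ψ z = ⊥ → ψ u = ⊥ ∧ ψ w = ⊥ := by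
    intro hzbot
    have hwu : ψ w ≤ ψ u := by simpa [hzbot] using hqc w ⟨huw.le, hwz⟩
    have hubot : ψ u = ⊥ := hu.resolve_right hwu.not_gt
    exact ⟨hubot, le_bot_iff.1 (hubot ▸ hwu)⟩
  refine ⟨?_, fun hwbot hzbot => hwbot (hbot hzbot).2⟩
  by_cases hzbot : ψ z = ⊥
  · refine (sDini_eq_bot_of_eventually ?_).trans_lt EReal.bot_lt_zero
    filter_upwards [eventually_add_mul_mem (convex_Icc u z) (d := -1) (sub_pos.2 huz)
      ⟨huz.le, le_rfl⟩ (by simpa using huz.le)] with s hs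
    have : ψ (z + s * -1) = ⊥ := by simpa [hzbot, (hbot hzbot).1] using hqc _ hs
    rw [this, eResid_bot_left]
  · have hlt : ψ u < ψ z := by
      rcases hu with hubot | hlt
      · exact hubot ▸ bot_lt_iff_ne_bot.2 hzbot
      · exact hlt.trans_le ((le_max_iff.1 (hqc w ⟨huw.le, hwz⟩)).resolve_left hlt.not_ge)
    have := sDini_mul_direction_neg (one_div_pos.2 (sub_pos.2 huz)) (hpc u z hlt)
    rwa [← neg_sub z u, mul_neg, one_div_mul_cancel (sub_pos.2 huz).ne'] at this

end OneDim

section Radial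

variable {X : Type*} [AddCommGroup X] [Module ℝ X]

lemma vDini_add_smul_eq_sDini (φ : X → EReal) (a v : X) (x d : ℝ) :
    vDini φ (a + x • v) (d • v) = sDini (fun s => φ (a + s • v)) x d := by
  simp only [vDini, sDini, add_smul, mul_smul, add_assoc]

lemma radRestr_of_mem (φ : X → EReal) (a c : X) {x : ℝ} (hx : x ∈ Icc (0 : ℝ) 1) :
    radRestr φ a c x = φ (a + x • (c - a)) :=
  if_pos hx

lemma radRestr_one (φ : X → EReal) (a c : X) : radRestr φ a c 1 = φ c := by
  simp [radRestr_of_mem φ a c (right_mem_Icc.2 zero_le_one)]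

lemma radRestr_ne_top {φ : X → EReal} {a : X}
    (hstar : ∀ x : X, φ x ≠ ⊤ → ∀ t ∈ Icc (0 : ℝ) 1, φ (t • a + (1 - t) • x) ≠ ⊤) {c : X}
    (hc : φ c ≠ ⊤) {x : ℝ} (hx : x ∈ Icc (0 : ℝ) 1) : radRestr φ a c x ≠ ⊤ := by
  rw [radRestr_of_mem φ a c hx]
  convert hstar c hc (1 - x) ⟨by linarith [hx.2], by linarith [hx.1]⟩ using 2
  module

lemma sDini_radRestr (φ : X → EReal) (a c : X) {x d : ℝ} (hx : x ∈ Ioc (0 : ℝ) 1)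
    (hd : d < 0) : sDini (radRestr φ a c) x d = vDini φ (a + x • (c - a)) (d • (c - a)) := by
  rw [vDini_add_smul_eq_sDini]
  refine sDini_congr (radRestr_of_mem φ a c (Ioc_subset_Icc_self hx)) ?_
  have hδ : 0 < x / -d := div_pos hx.1 (neg_pos.2 hd)
  filter_upwards [eventually_add_mul_mem (convex_Icc 0 1) hδ (Ioc_subset_Icc_self hx)
    (by rw [div_mul_eq_mul_div, div_neg, mul_div_cancel_right₀ _ hd.ne]; simp)] with s hs
  exact radRestr_of_mem φ a c hs

end Radial

theorem dini_negative_along_ray_general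
    {X : Type*} [AddCommGroup X] [Module ℝ X]
    (φ : X → EReal) (a : X)
    (hradlsc : ∀ b : X, LowerSemicontinuous (radRestr φ a b))
    (hradpc : ∀ b : X, PCone (radRestr φ a b))
    (hstar : ∀ x : X, φ x ≠ ⊤ → ∀ t ∈ Set.Icc (0 : ℝ) 1, φ (t • a + (1 - t) • x) ≠ ⊤)
    (b : X) (hb : vDini φ b (a - b) < 0) :
    ∀ t : ℝ, 1 ≤ t →
      vDini φ (a + t • (b - a)) (a - (a + t • (b - a))) < 0 ∧
      (φ b ≠ ⊥ → φ (a + t • (b - a)) ≠ ⊥) := by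
  intro t ht
  have ht₀ : 0 < t := one_pos.trans_le ht
  have hwt : t⁻¹ ∈ Ioc (0 : ℝ) 1 := ⟨inv_pos.2 ht₀, inv_le_one_of_one_le₀ ht⟩
  set c := a + t • (b - a)
  have hb_eq : a + t⁻¹ • (c - a) = b := by simp [c, smul_smul, inv_mul_cancel₀ ht₀.ne']
  have hψb : radRestr φ a c t⁻¹ = φ b := by
    rw [radRestr_of_mem φ a c (Ioc_subset_Icc_self hwt), hb_eq]
  have hw : sDini (radRestr φ a c) t⁻¹ (-1) < 0 := by
    have hscaled : sDini (radRestr φ a c) t⁻¹ (-t⁻¹) < 0 := by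
      rwa [sDini_radRestr φ a c hwt (neg_neg_of_pos hwt.1), hb_eq,
        show (-t⁻¹) • (c - a) = a - b by rw [neg_smul, ← hb_eq]; abel]
    simpa [ht₀.ne'] using sDini_mul_direction_neg ht₀ hscaled
  obtain ⟨hdini, hbot⟩ := (hradpc c).sDini_neg_of_sDini_neg (hradlsc c) hwt.1 hwt.2
    (fun hc _ hx => radRestr_ne_top hstar (radRestr_one φ a c ▸ hc) hx) hw
  refine ⟨?_, fun hb' => radRestr_one φ a c ▸ hbot (hψb ▸ hb')⟩
  rwa [sDini_radRestr φ a c (right_mem_Ioc.2 zero_lt_one) neg_one_lt_zero, one_smul,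
    neg_one_smul, add_sub_cancel, neg_sub] at hdini

/-- Let `φ` be radially pseudoconvex and radially l.s.c. at `a ∈ dom φ` with `dom φ`
star-shaped at `a`. If `φ↓(b, a-b) < 0`, then `φ↓(b_t, a-b_t) < 0` for all `t ≥ 1`,
where `b_t = a + t(b-a)`; if additionally `φ(b) > -∞`, then `φ(b_t) > -∞` for `t ≥ 1`. -/
theorem dini_negative_along_ray
    {X : Type*} [AddCommGroup X] [Module ℝ X]
    (φ : X → EReal) (a : X) (ha : φ a ≠ ⊤)
    (hradlsc : ∀ b : X, LowerSemicontinuous (radRestr φ a b))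
    (hradpc : ∀ b : X, PCone (radRestr φ a b))
    (hstar : ∀ x : X, φ x ≠ ⊤ → ∀ t ∈ Set.Icc (0 : ℝ) 1, φ (t • a + (1 - t) • x) ≠ ⊤)
    (b : X) (hb : vDini φ b (a - b) < 0) :
    ∀ t : ℝ, 1 ≤ t →
      vDini φ (a + t • (b - a)) (a - (a + t • (b - a))) < 0 ∧
      (φ b ≠ ⊥ → φ (a + t • (b - a)) ≠ ⊥) :=
  dini_negative_along_ray_general φ a hradlsc hradpc hstar b hb
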